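/- arXiv:2404.14001 — 2 statements merged into one kernel-verified Lean document; each statement's English description precedes it below -/
import Mathlib

section
/- Let n ≥ 7 and let g = g^2_{(n,1)} be the complex Lie algebra with basis e_1,…,e_n and nonzero brackets [e_1,e_i] = e_{i+1} for 2 ≤ i ≤ n−2 and [e_i,e_n] = e_{i+2} for 2 ≤ i ≤ n−3. A linear map φ : g → g is a 1/2-derivation of g if and only if there exist scalars α_1,…,α_{n−1}, β_{n−2}, β_{n−1}, γ_{n−1} such that φ(e_1) = Σ_{i=1}^{n−1} α_i e_i, φ(e_2) = α_1 e_2 + β_{n−2} e_{n−2} + β_{n−1} e_{n−1}, φ(e_3) = α_1 e_3 + (1/2)β_{n−2} e_{n−1}, φ(e_i) = α_1 e_i for 4 ≤ i ≤ n−1, and φ(e_n) = −Σ_{i=3}^{n−2} α_{i−1} e_i + γ_{n−1} e_{n−1} + α_1 e_n. -/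
/-!
On the whole algebra `ad e₁ ∘ ad e₁ = -ad eₙ`, and `V = span (e₂, …, e_{n-1})` is abelian, so a
bracket `⁅x, e_j⁆` with `e_j ∈ V` only sees the `e₁`- and `eₙ`-coordinates of `x`. Feeding the
relation into the 1/2-derivation identity for `(e₁, e_k)`, `(e₁, e_{k+1})` and `(e_k, eₙ)`
expresses `⁅φ e_k, eₙ⁆` through four scalars: the `e₁`- and `eₙ`-coordinates of `φ e₁` and `φ eₙ`.
Reading off coordinates for `k = 2, 3`, together with the identity for `(e₁, e₂)`, kills the
`eₙ`-coordinate of `φ e₁`, forces `φ eₙ` to have the same `eₙ`-coordinate as the `e₁`-coordinate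
of `φ e₁`, and, with the identity for `(e₂, e₃)`, pins down `φ e₂`. The identity for `(e₁, e_j)`
then determines `φ e_{j+1}` from `φ e_j`, and the one for `(e₁, eₙ)` determines `φ eₙ`. Conversely, the identity is bilinear and
antisymmetric, so it suffices to check it on pairs `e_i, e_j` with `i < j`.
-/

open Module Finset

section HalfDerivation

variable {K L : Type*} [Field K] [LieRing L] [LieAlgebra K L]

def IsHalfDerivation (φ : L →ₗ[K] L) : Prop :=
  ∀ x y : L, φ ⁅x, y⁆ = (2 : K)⁻¹ • (⁅φ x, y⁆ + ⁅x, φ y⁆)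

theorem IsHalfDerivation.of_basis {ι : Type*} [LinearOrder ι] (b : Basis ι K L)
    {φ : L →ₗ[K] L}
    (h : ∀ i j, i < j → φ ⁅b i, b j⁆ = (2 : K)⁻¹ • (⁅φ (b i), b j⁆ + ⁅b i, φ (b j)⁆)) :
    IsHalfDerivation φ := by
  let ad : L →ₗ[K] L →ₗ[K] L := LieAlgebra.ad K L
  have key : ad.compr₂ φ = (2 : K)⁻¹ • (ad.comp φ + ad.compl₂ φ) := by
    refine LinearMap.ext_basis b b fun i j => ?_
    simp only [LinearMap.compr₂_apply, LinearMap.smul_apply, LinearMap.add_apply,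
      LinearMap.comp_apply, LinearMap.compl₂_apply, ad, LieHom.coe_toLinearMap,
      LieAlgebra.ad_apply]
    rcases lt_trichotomy i j with hij | rfl | hij
    · exact h i j hij
    · rw [lie_self, map_zero, ← lie_skew (b i) (φ (b i)), add_neg_cancel, smul_zero]
    · rw [← lie_skew, map_neg, h j i hij, ← lie_skew (φ (b j)), ← lie_skew (b j)]
      module
  intro x y
  simpa [ad] using LinearMap.congr_fun₂ key x y

theorem IsHalfDerivation.two_smul_map_lie [NeZero (2 : K)] {φ : L →ₗ[K] L}
    (hφ : IsHalfDerivation φ) (x y : L) : (2 : K) • φ ⁅x, y⁆ = ⁅φ x, y⁆ + ⁅x, φ y⁆ := by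
  rw [hφ, smul_inv_smul₀ (NeZero.ne 2)]

theorem IsHalfDerivation.lie_map_eq_of_lie_lie [NeZero (2 : K)] {φ : L →ₗ[K] L}
    (hφ : IsHalfDerivation φ) {u w : L} (huw : ∀ x, ⁅u, ⁅u, x⁆⁆ = ⁅x, w⁆) (y : L) :
    ⁅φ y, w⁆ = (2 : K) • ⁅φ u, ⁅u, y⁆⁆ + ⁅u, ⁅φ u, y⁆⁆ + (2 : K) • ⁅φ w, y⁆ := by
  have h₁ := hφ.two_smul_map_lie u ⁅u, y⁆
  have h₂ := hφ.two_smul_map_lie u y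
  have h₃ := hφ.two_smul_map_lie y w
  rw [huw y] at h₁
  have h₄ := congrArg (⁅u, ·⁆) h₂
  simp only [lie_smul, lie_add, huw] at h₄
  rw [← lie_skew (φ w) y]
  linear_combination (norm := module) (2 : K) • h₁ - (2 : K) • h₃ + h₄

end HalfDerivation

namespace G2n1

section Brackets

variable {L : Type*} [LieRing L] {n : ℕ} {e : ℕ → L}

def HasBrackets (n : ℕ) (e : ℕ → L) : Prop :=
  ∀ i j : ℕ, 1 ≤ i → i < j → j ≤ n →
    ⁅e i, e j⁆ =
      if i = 1 ∧ 2 ≤ j ∧ j ≤ n - 2 then e (j + 1)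
      else if j = n ∧ 2 ≤ i ∧ i ≤ n - 3 then e (i + 2)
      else 0

theorem HasBrackets.lie_one (h : HasBrackets n e) {j : ℕ} (hj : 2 ≤ j) (hj' : j ≤ n - 2) :
    ⁅e 1, e j⁆ = e (j + 1) := by
  rw [h 1 j le_rfl (by omega) (by omega), if_pos ⟨rfl, hj, hj'⟩]

theorem HasBrackets.lie_one_eq_zero (h : HasBrackets n e) {j : ℕ} (hj : n - 2 < j) (hj' : j ≤ n)
    (hj₂ : 2 ≤ j) : ⁅e 1, e j⁆ = 0 := by
  rw [h 1 j le_rfl (by omega) hj', if_neg (by omega), if_neg (by omega)]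

theorem HasBrackets.lie_last (h : HasBrackets n e) {i : ℕ} (hi : 2 ≤ i) (hi' : i ≤ n - 3) :
    ⁅e i, e n⁆ = e (i + 2) := by
  rw [h i n (by omega) (by omega) le_rfl, if_neg (by omega), if_pos ⟨rfl, hi, hi'⟩]

theorem HasBrackets.lie_last_eq_zero (h : HasBrackets n e) {i : ℕ} (hi : n - 3 < i)
    (hi' : i < n) (hi₂ : 2 ≤ i) : ⁅e i, e n⁆ = 0 := by
  rw [h i n (by omega) hi' le_rfl, if_neg (by omega), if_neg (by omega)]

theorem HasBrackets.lie_mid (h : HasBrackets n e) {i j : ℕ} (hi : 2 ≤ i) (hi' : i < n)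
    (hj : 2 ≤ j) (hj' : j < n) : ⁅e i, e j⁆ = 0 := by
  rcases lt_trichotomy i j with hij | rfl | hij
  · rw [h i j (by omega) hij hj'.le, if_neg (by omega), if_neg (by omega)]
  · exact lie_self _
  · rw [← lie_skew, h j i (by omega) hij hi'.le, if_neg (by omega), if_neg (by omega), neg_zero]

end Brackets

section Basis

variable {K L : Type*} [Field K] [LieRing L] [LieAlgebra K L] {n : ℕ} {e : ℕ → L}
  {b : Basis (Fin n) K L} {φ : L →ₗ[K] L}

noncomputable def coord (b : Basis (Fin n) K L) (k : ℕ) : L →ₗ[K] K :=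
  if h : 1 ≤ k ∧ k ≤ n then b.coord ⟨k - 1, by omega⟩ else 0

theorem e_eq_basis (hb : ∀ i : Fin n, e (i.1 + 1) = b i) {k : ℕ} (hk : 1 ≤ k) (hk' : k ≤ n) :
    e k = b ⟨k - 1, by omega⟩ := by
  have := hb ⟨k - 1, by omega⟩
  rwa [Nat.sub_add_cancel hk] at this

theorem coord_e (hb : ∀ i : Fin n, e (i.1 + 1) = b i) {k m : ℕ} (hm : 1 ≤ m) (hm' : m ≤ n) :
    coord b k (e m) = if m = k then 1 else 0 := by
  rw [coord, e_eq_basis hb hm hm']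
  split_ifs with hk hmk hmk
  · simp [hmk]
  · rw [Basis.coord_apply, Basis.repr_self, Finsupp.single_eq_of_ne]
    simp [Fin.ext_iff]; omega
  · omega
  · rfl

theorem coord_e_self (hb : ∀ i : Fin n, e (i.1 + 1) = b i) {k : ℕ} (hk : 1 ≤ k) (hk' : k ≤ n) :
    coord b k (e k) = 1 := by
  rw [coord_e hb hk hk', if_pos rfl]

theorem coord_e_of_ne (hb : ∀ i : Fin n, e (i.1 + 1) = b i) {k m : ℕ} (hm : 1 ≤ m)
    (hm' : m ≤ n) (hmk : m ≠ k) : coord b k (e m) = 0 := by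
  rw [coord_e hb hm hm', if_neg hmk]

theorem ext_e (hb : ∀ i : Fin n, e (i.1 + 1) = b i) {M : Type*} [AddCommGroup M] [Module K M]
    {f g : L →ₗ[K] M} (h : ∀ k, 1 ≤ k → k ≤ n → f (e k) = g (e k)) : f = g :=
  b.ext fun i => by rw [← hb]; exact h _ (by omega) (by omega)

theorem ext_coord {x y : L}
    (h : ∀ k, 1 ≤ k → k ≤ n → coord b k x = coord b k y) : x = y := by
  refine b.ext_elem fun i => ?_
  have := h (i + 1) (by omega) (by omega)
  simpa [coord, Basis.coord_apply] using this

theorem coord_sum_smul_e (hb : ∀ i : Fin n, e (i.1 + 1) = b i) {s : Finset ℕ}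
    (hs : s ⊆ Icc 1 n) (f : ℕ → K) {m : ℕ} :
    coord b m (∑ i ∈ s, f i • e i) = if m ∈ s then f m else 0 := by
  simp only [map_sum, map_smul]
  rw [Finset.sum_congr rfl fun i hi => by
    have := mem_Icc.mp (hs hi)
    rw [coord_e hb this.1 this.2, smul_eq_mul, mul_ite, mul_one, mul_zero]]
  exact Finset.sum_ite_eq' s m f

theorem coord_neg_sum_add_smul_e (hb : ∀ i : Fin n, e (i.1 + 1) = b i) (hn : 2 ≤ n)
    (α : ℕ → K) (γ a : K) (m : ℕ) :
    coord b m (-(∑ k ∈ Icc 3 (n - 2), α (k - 1) • e k) + γ • e (n - 1) + a • e n)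
      = -(if 3 ≤ m ∧ m ≤ n - 2 then α (m - 1) else 0) + (if n - 1 = m then γ else 0)
        + (if n = m then a else 0) := by
  simp only [map_add, map_neg, map_smul,
    coord_sum_smul_e hb (s := Icc 3 (n - 2)) (Icc_subset_Icc (by omega) (by omega)),
    coord_e hb (by omega : 1 ≤ n - 1) (by omega : n - 1 ≤ n), coord_e hb (by omega : 1 ≤ n) le_rfl,
    mem_Icc, smul_eq_mul, mul_ite, mul_one, mul_zero]

theorem isHalfDerivation_of_e (hb : ∀ i : Fin n, e (i.1 + 1) = b i)
    (hφ : ∀ i j, 1 ≤ i → i < j → j ≤ n →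
      φ ⁅e i, e j⁆ = (2 : K)⁻¹ • (⁅φ (e i), e j⁆ + ⁅e i, φ (e j)⁆)) :
    IsHalfDerivation φ :=
  .of_basis b fun i j hij => by
    rw [← hb i, ← hb j]
    exact hφ _ _ (by omega) (by simpa using hij) (by omega)

theorem lie_e_one_lie_e_one (h : HasBrackets n e) (hb : ∀ i : Fin n, e (i.1 + 1) = b i)
    (hn : 2 ≤ n) (x : L) : ⁅e 1, ⁅e 1, x⁆⁆ = ⁅x, e n⁆ := by
  have key : LieAlgebra.ad K L (e 1) * LieAlgebra.ad K L (e 1) = -LieAlgebra.ad K L (e n) := by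
    refine ext_e hb fun k hk hk' => ?_
    simp only [Module.End.mul_apply, LieAlgebra.ad_apply, LinearMap.neg_apply, lie_skew]
    rcases (by omega : k = 1 ∨ (2 ≤ k ∧ k ≤ n - 3) ∨ (n - 3 < k ∧ k < n ∧ 2 ≤ k) ∨ k = n)
      with rfl | hk₂ | hk₂ | rfl
    · rw [lie_self, lie_zero, h.lie_one_eq_zero (by omega) le_rfl hn]
    · rw [h.lie_one hk₂.1 (by omega), h.lie_one (by omega) (by omega), h.lie_last hk₂.1 hk₂.2]
    · rw [h.lie_last_eq_zero hk₂.1 hk₂.2.1 hk₂.2.2]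
      rcases (by omega : k = n - 2 ∨ k = n - 1) with rfl | rfl
      · rw [h.lie_one (by omega) le_rfl, show n - 2 + 1 = n - 1 by omega,
          h.lie_one_eq_zero (by omega) (by omega) (by omega)]
      · rw [h.lie_one_eq_zero (by omega) (by omega) (by omega), lie_zero]
    · rw [lie_self, h.lie_one_eq_zero (by omega) le_rfl hn, lie_zero]
  simpa using LinearMap.congr_fun key x

theorem lie_e_of_two_le (h : HasBrackets n e) (hb : ∀ i : Fin n, e (i.1 + 1) = b i) {j : ℕ}
    (hj : 2 ≤ j) (hj' : j < n) (x : L) :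
    ⁅x, e j⁆ = coord b 1 x • ⁅e 1, e j⁆ + coord b n x • ⁅e n, e j⁆ := by
  have key : -LieAlgebra.ad K L (e j) =
      (coord b 1).smulRight ⁅e 1, e j⁆ + (coord b n).smulRight ⁅e n, e j⁆ := by
    refine ext_e hb fun k hk hk' => ?_
    simp only [LinearMap.neg_apply, LieAlgebra.ad_apply, lie_skew, LinearMap.add_apply,
      LinearMap.smulRight_apply, coord_e hb hk hk']
    rcases (by omega : k = 1 ∨ (2 ≤ k ∧ k < n) ∨ k = n) with rfl | hk₂ | hkn
    · simp [show 1 ≠ n by omega]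
    · simp [h.lie_mid hk₂.1 hk₂.2 hj hj', show k ≠ 1 by omega, show k ≠ n by omega]
    · rw [hkn]
      simp [show n ≠ 1 by omega]
  simpa using LinearMap.congr_fun key x

theorem lie_e_eq_sub (h : HasBrackets n e) (hb : ∀ i : Fin n, e (i.1 + 1) = b i) (x : L)
    {i : ℕ} (hi : 2 ≤ i) (hi' : i ≤ n - 3) :
    ⁅x, e i⁆ = coord b 1 x • e (i + 1) - coord b n x • e (i + 2) := by
  rw [lie_e_of_two_le h hb hi (by omega), h.lie_one hi (by omega), ← lie_skew,
    h.lie_last hi hi', smul_neg, sub_eq_add_neg]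

theorem coord_lie_e_one (h : HasBrackets n e) (hb : ∀ i : Fin n, e (i.1 + 1) = b i) (m : ℕ)
    (x : L) : coord b m ⁅e 1, x⁆ = if 3 ≤ m ∧ m ≤ n - 1 then coord b (m - 1) x else 0 := by
  have key : coord b m ∘ₗ LieAlgebra.ad K L (e 1) =
      if 3 ≤ m ∧ m ≤ n - 1 then coord b (m - 1) else 0 := by
    refine ext_e hb fun k hk hk' => ?_
    simp only [LinearMap.comp_apply, LieAlgebra.ad_apply, LinearMap.zero_apply,
      apply_ite (fun f : L →ₗ[K] K => f (e k)), coord_e hb hk hk']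
    rcases (by omega : k = 1 ∨ (2 ≤ k ∧ k ≤ n - 2) ∨ (n - 2 < k ∧ 2 ≤ k)) with rfl | hk₂ | hk₂
    · rw [lie_self, map_zero]; split_ifs <;> first | rfl | omega
    · rw [h.lie_one hk₂.1 hk₂.2, coord_e hb (by omega) (by omega)]
      split_ifs <;> first | rfl | omega
    · rw [h.lie_one_eq_zero hk₂.1 hk' hk₂.2, map_zero]; split_ifs <;> first | rfl | omega
  have := LinearMap.congr_fun key x
  split_ifs at this ⊢ <;> exact this

theorem coord_lie_e_last (h : HasBrackets n e) (hb : ∀ i : Fin n, e (i.1 + 1) = b i)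
    (hn : 2 ≤ n) (m : ℕ) (x : L) :
    coord b m ⁅x, e n⁆ = if 4 ≤ m ∧ m ≤ n - 1 then coord b (m - 2) x else 0 := by
  rw [← lie_e_one_lie_e_one h hb hn, coord_lie_e_one h hb, coord_lie_e_one h hb]
  split_ifs <;> first | rfl | omega

theorem lie_e_one_add_smul_e_two (h : HasBrackets n e) (hn : 4 ≤ n) (p q r : K) :
    ⁅e 1, p • e 2 + q • e (n - 2) + r • e (n - 1)⁆ = p • e 3 + q • e (n - 1) := by
  rw [lie_add, lie_add, lie_smul, lie_smul, lie_smul, h.lie_one le_rfl (by omega),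
    h.lie_one (by omega) le_rfl, h.lie_one_eq_zero (by omega) (by omega) (by omega),
    show n - 2 + 1 = n - 1 by omega, smul_zero, add_zero]

theorem lie_e_one_add_smul_e_three (h : HasBrackets n e) (hn : 5 ≤ n) (p q : K) :
    ⁅e 1, p • e 3 + q • e (n - 1)⁆ = p • e 4 := by
  rw [lie_add, lie_smul, lie_smul, h.lie_one (by omega) (by omega),
    h.lie_one_eq_zero (by omega) (by omega) (by omega), smul_zero, add_zero]

theorem lie_sum_e_last_add_lie_e_one (h : HasBrackets n e) (hb : ∀ i : Fin n, e (i.1 + 1) = b i)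
    (hn : 2 ≤ n) (α : ℕ → K) (γ : K) :
    ⁅∑ i ∈ Icc 1 (n - 1), α i • e i, e n⁆
      + ⁅e 1, -(∑ i ∈ Icc 3 (n - 2), α (i - 1) • e i) + γ • e (n - 1) + α 1 • e n⁆ = 0 := by
  refine ext_coord (b := b) fun m hm hm' => ?_
  rw [map_add, coord_lie_e_last h hb (by omega), coord_lie_e_one h hb, map_zero,
    coord_sum_smul_e hb (Icc_subset_Icc le_rfl (by omega)),
    coord_neg_sum_add_smul_e hb (by omega)]
  simp only [mem_Icc]
  split_ifs <;> first | omega | (rw [show m - 1 - 1 = m - 2 by omega]; ring) | ring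

theorem lie_sum_smul_e_e (h : HasBrackets n e) (hb : ∀ i : Fin n, e (i.1 + 1) = b i)
    (α : ℕ → K) {j : ℕ} (hj : 2 ≤ j) (hj' : j < n) :
    ⁅∑ i ∈ Icc 1 (n - 1), α i • e i, e j⁆ = α 1 • ⁅e 1, e j⁆ := by
  have hs : Icc 1 (n - 1) ⊆ Icc 1 n := Icc_subset_Icc le_rfl (Nat.sub_le n 1)
  rw [lie_e_of_two_le h hb hj hj', coord_sum_smul_e hb hs, coord_sum_smul_e hb hs,
    if_pos (by simp; omega),
    if_neg (by simp; omega), zero_smul, add_zero]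

theorem lie_e_neg_sum_smul_e (h : HasBrackets n e) (hb : ∀ i : Fin n, e (i.1 + 1) = b i)
    (α : ℕ → K) (γ : K) {i : ℕ} (hi : 2 ≤ i) (hi' : i < n) :
    ⁅e i, -(∑ k ∈ Icc 3 (n - 2), α (k - 1) • e k) + γ • e (n - 1) + α 1 • e n⁆
      = α 1 • ⁅e i, e n⁆ := by
  rw [← lie_skew, lie_e_of_two_le h hb hi hi', coord_neg_sum_add_smul_e hb (by omega),
    coord_neg_sum_add_smul_e hb (by omega)]
  split_ifs <;> first | omega | simp [← smul_neg]

theorem lie_map_e_of_two_le (h : HasBrackets n e) (hn : 4 ≤ n) {a p q r : K}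
    (h₂ : φ (e 2) = a • e 2 + p • e (n - 2) + q • e (n - 1))
    (h₃ : φ (e 3) = a • e 3 + r • e (n - 1))
    (h₄ : ∀ i : ℕ, 4 ≤ i → i ≤ n - 1 → φ (e i) = a • e i)
    {i j : ℕ} (hi : 2 ≤ i) (hi' : i < n) (hj : 2 ≤ j) (hj' : j ≤ n) :
    ⁅φ (e i), e j⁆ = a • ⁅e i, e j⁆ := by
  have hz : ∀ k, n - 3 < k → k < n → ⁅e k, e j⁆ = 0 := fun k hk hk' => by
    rcases (by omega : j < n ∨ j = n) with hj'' | rfl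
    · exact h.lie_mid (by omega) hk' hj hj''
    · exact h.lie_last_eq_zero hk hk' (by omega)
  rcases (by omega : i = 2 ∨ i = 3 ∨ 4 ≤ i) with rfl | rfl | hi₄
  · rw [h₂, add_lie, add_lie, smul_lie, smul_lie, smul_lie, hz (n - 2) (by omega) (by omega),
      hz (n - 1) (by omega) (by omega), smul_zero, smul_zero, add_zero, add_zero]
  · rw [h₃, add_lie, smul_lie, smul_lie, hz (n - 1) (by omega) (by omega), smul_zero, add_zero]
  · rw [h₄ i hi₄ (by omega), smul_lie]

end Basis

section HalfDerivations

variable {K L : Type*} [Field K] [CharZero K] [LieRing L] [LieAlgebra K L] {n : ℕ} {e : ℕ → L}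
  {b : Basis (Fin n) K L} {φ : L →ₗ[K] L}

theorem two_smul_map_e_succ (h : HasBrackets n e) (hφ : IsHalfDerivation φ) {j : ℕ}
    (hj : 2 ≤ j) (hj' : j ≤ n - 2) :
    (2 : K) • φ (e (j + 1)) = ⁅φ (e 1), e j⁆ + ⁅e 1, φ (e j)⁆ := by
  rw [← h.lie_one hj hj', hφ.two_smul_map_lie]

theorem lie_map_e_last (h : HasBrackets n e) (hb : ∀ i : Fin n, e (i.1 + 1) = b i)
    (hφ : IsHalfDerivation φ) {k : ℕ} (hk : 2 ≤ k) (hk' : k ≤ n - 4) :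
    ⁅φ (e k), e n⁆ = (2 * coord b 1 (φ (e n))) • e (k + 1)
      + (3 * coord b 1 (φ (e 1)) - 2 * coord b n (φ (e n))) • e (k + 2)
      - (3 * coord b n (φ (e 1))) • e (k + 3) := by
  rw [hφ.lie_map_eq_of_lie_lie (lie_e_one_lie_e_one h hb (by omega)), h.lie_one hk (by omega),
    lie_e_eq_sub h hb _ (by omega) (by omega), lie_e_eq_sub h hb _ hk (by omega),
    lie_e_eq_sub h hb _ hk (by omega), lie_sub, lie_smul, lie_smul,
    h.lie_one (by omega) (by omega), h.lie_one (by omega) (by omega)]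
  module

theorem coord_map_e_self (h : HasBrackets n e) (hb : ∀ i : Fin n, e (i.1 + 1) = b i)
    (hφ : IsHalfDerivation φ) {k : ℕ} (hk : 2 ≤ k) (hk' : k ≤ n - 4) :
    coord b k (φ (e k)) = 3 * coord b 1 (φ (e 1)) - 2 * coord b n (φ (e n)) := by
  have := congrArg (coord b (k + 2)) (lie_map_e_last h hb hφ hk hk')
  simpa (disch := omega) only [map_add, map_sub, map_smul, coord_lie_e_last h hb (by omega),
    if_pos, Nat.add_sub_cancel, coord_e_self hb, coord_e_of_ne hb, smul_eq_mul, mul_zero,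
    mul_one, zero_add, sub_zero] using this

theorem coord_succ_map_e (h : HasBrackets n e) (hb : ∀ i : Fin n, e (i.1 + 1) = b i)
    (hφ : IsHalfDerivation φ) {k : ℕ} (hk : 2 ≤ k) (hk' : k ≤ n - 4) :
    coord b (k + 1) (φ (e k)) = -(3 * coord b n (φ (e 1))) := by
  have := congrArg (coord b (k + 3)) (lie_map_e_last h hb hφ hk hk')
  simpa (disch := omega) only [map_add, map_sub, map_smul, coord_lie_e_last h hb (by omega),
    if_pos, show k + 3 - 2 = k + 1 by omega, coord_e_self hb, coord_e_of_ne hb, smul_eq_mul,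
    mul_zero, mul_one, zero_add, zero_sub] using this

theorem coord_one_map_e_last (h : HasBrackets n e) (hb : ∀ i : Fin n, e (i.1 + 1) = b i)
    (hn : 7 ≤ n) (hφ : IsHalfDerivation φ) : coord b 1 (φ (e n)) = 0 := by
  have := congrArg (coord b 3) (lie_map_e_last h hb hφ le_rfl (by omega))
  simp (disch := omega) only [map_add, map_sub, map_smul, coord_lie_e_last h hb (by omega),
    if_neg, coord_e_self hb, coord_e_of_ne hb, smul_eq_mul, mul_zero, mul_one, add_zero,
    sub_zero] at this
  linear_combination -this / 2

theorem two_mul_coord_map_e_three (h : HasBrackets n e) (hb : ∀ i : Fin n, e (i.1 + 1) = b i)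
    (hφ : IsHalfDerivation φ) {m : ℕ} (hm : 3 ≤ m) (hm' : m ≤ n - 1) :
    2 * coord b m (φ (e 3)) = coord b m ⁅φ (e 1), e 2⁆ + coord b (m - 1) (φ (e 2)) := by
  have := congrArg (coord b m) (two_smul_map_e_succ h hφ le_rfl (by omega))
  rwa [map_smul, map_add, coord_lie_e_one h hb, if_pos (by omega), smul_eq_mul] at this

theorem coord_last_map_e_one (h : HasBrackets n e) (hb : ∀ i : Fin n, e (i.1 + 1) = b i)
    (hn : 7 ≤ n) (hφ : IsHalfDerivation φ) : coord b n (φ (e 1)) = 0 := by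
  have h₂ := coord_succ_map_e h hb hφ le_rfl (by omega)
  have h₃ := coord_succ_map_e h hb hφ (k := 3) (by omega) (by omega)
  have h₄ := two_mul_coord_map_e_three h hb hφ (m := 4) (by omega) (by omega)
  simp (disch := omega) only [lie_e_eq_sub h hb _ le_rfl (by omega : 2 ≤ n - 3), map_sub,
    map_smul, coord_e_self hb, coord_e_of_ne hb, smul_eq_mul, mul_zero, mul_one, zero_sub] at h₄
  linear_combination (-h₄ + 2 * h₃ - h₂) / 2

theorem coord_last_map_e_last (h : HasBrackets n e) (hb : ∀ i : Fin n, e (i.1 + 1) = b i)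
    (hn : 7 ≤ n) (hφ : IsHalfDerivation φ) : coord b n (φ (e n)) = coord b 1 (φ (e 1)) := by
  have h₂ := coord_map_e_self h hb hφ le_rfl (by omega)
  have h₃ := coord_map_e_self h hb hφ (k := 3) (by omega) (by omega)
  have h₄ := two_mul_coord_map_e_three h hb hφ (m := 3) le_rfl (by omega)
  simp (disch := omega) only [lie_e_eq_sub h hb _ le_rfl (by omega : 2 ≤ n - 3), map_sub,
    map_smul, coord_e_self hb, coord_e_of_ne hb, smul_eq_mul, mul_zero, mul_one, sub_zero] at h₄
  linear_combination (-h₄ + 2 * h₃ - h₂) / 2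

theorem coord_map_e_three_eq_zero (h : HasBrackets n e) (hb : ∀ i : Fin n, e (i.1 + 1) = b i)
    (hn : 7 ≤ n) (hφ : IsHalfDerivation φ) {m : ℕ} (hm : m = 1 ∨ m = n) :
    coord b m (φ (e 3)) = 0 := by
  have := congrArg (coord b m) (two_smul_map_e_succ h hφ le_rfl (by omega))
  rw [map_smul, map_add, coord_lie_e_one h hb, if_neg (by omega),
    lie_e_eq_sub h hb _ le_rfl (by omega)] at this
  simpa (disch := omega) only [map_sub, map_smul, coord_e_of_ne hb, smul_eq_mul, mul_zero,
    sub_zero, add_zero, mul_eq_zero, two_ne_zero, false_or] using this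

theorem lie_map_e_two_e_three (h : HasBrackets n e) (hb : ∀ i : Fin n, e (i.1 + 1) = b i)
    (hn : 7 ≤ n) (hφ : IsHalfDerivation φ) : ⁅φ (e 2), e 3⁆ = 0 := by
  have := hφ.two_smul_map_lie (e 2) (e 3)
  rwa [h.lie_mid le_rfl (by omega) (by omega) (by omega), map_zero, smul_zero,
    ← lie_skew (e 2) (φ (e 3)),
    lie_e_eq_sub h hb _ le_rfl (by omega), coord_map_e_three_eq_zero h hb hn hφ (.inl rfl),
    coord_map_e_three_eq_zero h hb hn hφ (.inr rfl), zero_smul, zero_smul, sub_zero, neg_zero,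
    add_zero, eq_comm] at this

theorem coord_map_e_two_eq_zero (h : HasBrackets n e) (hb : ∀ i : Fin n, e (i.1 + 1) = b i)
    (hn : 7 ≤ n) (hφ : IsHalfDerivation φ) {m : ℕ} (hm : m = 1 ∨ m = n) :
    coord b m (φ (e 2)) = 0 := by
  have h₀ := lie_map_e_two_e_three h hb hn hφ
  rw [lie_e_eq_sub h hb _ (by omega) (by omega)] at h₀
  rcases hm with rfl | rfl
  · simpa (disch := omega) only [map_sub, map_smul, coord_e_self hb, coord_e_of_ne hb,
      smul_eq_mul, mul_one, mul_zero, sub_zero, map_zero] using congrArg (coord b 4) h₀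
  · simpa (disch := omega) only [map_sub, map_smul, coord_e_self hb, coord_e_of_ne hb,
      smul_eq_mul, mul_one, mul_zero, zero_sub, neg_eq_zero, map_zero] using
      congrArg (coord b 5) h₀

theorem coord_map_e_two_of_le (h : HasBrackets n e) (hb : ∀ i : Fin n, e (i.1 + 1) = b i)
    (hn : 7 ≤ n) (hφ : IsHalfDerivation φ) {m : ℕ} (hm : 4 ≤ m) (hm' : m ≤ n - 3) :
    coord b m (φ (e 2)) = 0 := by
  have := congrArg (coord b (m + 2)) (lie_map_e_last h hb hφ le_rfl (by omega))
  simpa (disch := omega) only [map_add, map_sub, map_smul, coord_lie_e_last h hb (by omega),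
    if_pos, Nat.add_sub_cancel, coord_e_of_ne hb, smul_eq_mul, mul_zero, add_zero,
    sub_zero] using this

theorem map_e_two (h : HasBrackets n e) (hb : ∀ i : Fin n, e (i.1 + 1) = b i)
    (hn : 7 ≤ n) (hφ : IsHalfDerivation φ) :
    φ (e 2) = coord b 1 (φ (e 1)) • e 2 + coord b (n - 2) (φ (e 2)) • e (n - 2)
      + coord b (n - 1) (φ (e 2)) • e (n - 1) := by
  refine ext_coord (b := b) fun m hm hm' => ?_
  simp only [map_add, map_smul, coord_e hb (by omega : 1 ≤ 2) (by omega : 2 ≤ n),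
    coord_e hb (by omega : 1 ≤ n - 2) (by omega : n - 2 ≤ n),
    coord_e hb (by omega : 1 ≤ n - 1) (by omega : n - 1 ≤ n), smul_eq_mul, mul_ite, mul_one,
    mul_zero]
  rcases (by omega : m = 1 ∨ m = 2 ∨ m = 3 ∨ (4 ≤ m ∧ m ≤ n - 3) ∨ m = n - 2 ∨ m = n - 1 ∨ m = n)
    with rfl | rfl | rfl | hm₂ | rfl | rfl | rfl
  · rw [coord_map_e_two_eq_zero h hb hn hφ (.inl rfl)]; split_ifs <;> first | omega | simp
  · rw [coord_map_e_self h hb hφ le_rfl (by omega), coord_last_map_e_last h hb hn hφ]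
    split_ifs <;> first | omega | ring
  · rw [coord_succ_map_e h hb hφ le_rfl (by omega), coord_last_map_e_one h hb hn hφ]
    split_ifs <;> first | omega | simp
  · rw [coord_map_e_two_of_le h hb hn hφ hm₂.1 hm₂.2]; split_ifs <;> first | omega | simp
  · split_ifs <;> first | omega | simp
  · split_ifs <;> first | omega | simp
  · rw [coord_map_e_two_eq_zero h hb hn hφ (.inr rfl)]; split_ifs <;> first | omega | simp

theorem map_e_succ (h : HasBrackets n e) (hb : ∀ i : Fin n, e (i.1 + 1) = b i)
    (hn : 7 ≤ n) (hφ : IsHalfDerivation φ) {j : ℕ} (hj : 2 ≤ j) (hj' : j ≤ n - 2) :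
    φ (e (j + 1)) = (2 : K)⁻¹ • (coord b 1 (φ (e 1)) • e (j + 1) + ⁅e 1, φ (e j)⁆) := by
  rw [← h.lie_one hj hj', hφ, lie_e_of_two_le h hb hj (by omega),
    coord_last_map_e_one h hb hn hφ, zero_smul, add_zero]

theorem map_e_three (h : HasBrackets n e) (hb : ∀ i : Fin n, e (i.1 + 1) = b i)
    (hn : 7 ≤ n) (hφ : IsHalfDerivation φ) :
    φ (e 3) = coord b 1 (φ (e 1)) • e 3
      + ((1 / 2 : K) * coord b (n - 2) (φ (e 2))) • e (n - 1) := by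
  have := map_e_succ h hb hn hφ le_rfl (by omega)
  rw [map_e_two h hb hn hφ, lie_e_one_add_smul_e_two h (by omega)] at this
  rw [this]
  module

theorem map_e_of_four_le (h : HasBrackets n e) (hb : ∀ i : Fin n, e (i.1 + 1) = b i)
    (hn : 7 ≤ n) (hφ : IsHalfDerivation φ) {i : ℕ} (hi : 4 ≤ i) (hi' : i ≤ n - 1) :
    φ (e i) = coord b 1 (φ (e 1)) • e i := by
  induction i, hi using Nat.le_induction with
  | base =>
    rw [map_e_succ h hb hn hφ (j := 3) (by omega) (by omega), map_e_three h hb hn hφ,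
      lie_e_one_add_smul_e_three h (by omega)]
    module
  | succ i hi ih =>
    rw [map_e_succ h hb hn hφ (j := i) (by omega) (by omega), ih (by omega), lie_smul,
      h.lie_one (by omega) (by omega)]
    module

theorem map_e_one (h : HasBrackets n e) (hb : ∀ i : Fin n, e (i.1 + 1) = b i)
    (hn : 7 ≤ n) (hφ : IsHalfDerivation φ) :
    φ (e 1) = ∑ i ∈ Icc 1 (n - 1), coord b i (φ (e 1)) • e i := by
  refine ext_coord (b := b) fun m hm hm' => ?_
  rw [coord_sum_smul_e hb (Icc_subset_Icc le_rfl (by omega))]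
  split_ifs with hmem
  · rfl
  · rw [show m = n by simp only [mem_Icc] at hmem; omega, coord_last_map_e_one h hb hn hφ]

theorem coord_map_e_last (h : HasBrackets n e) (hb : ∀ i : Fin n, e (i.1 + 1) = b i)
    (hn : 7 ≤ n) (hφ : IsHalfDerivation φ) {k : ℕ} (hk : 2 ≤ k) (hk' : k ≤ n - 2) :
    coord b k (φ (e n)) = if 3 ≤ k then -coord b (k - 1) (φ (e 1)) else 0 := by
  have := congrArg (coord b (k + 1)) (hφ.two_smul_map_lie (e 1) (e n))
  rw [h.lie_one_eq_zero (by omega) le_rfl (by omega), map_zero, smul_zero, map_zero, map_add,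
    coord_lie_e_last h hb (by omega), coord_lie_e_one h hb,
    if_pos (show 3 ≤ k + 1 ∧ k + 1 ≤ n - 1 by omega),
    Nat.add_sub_cancel, show k + 1 - 2 = k - 1 by omega] at this
  split_ifs at this ⊢ <;> first | omega | linear_combination -this

theorem map_e_last (h : HasBrackets n e) (hb : ∀ i : Fin n, e (i.1 + 1) = b i)
    (hn : 7 ≤ n) (hφ : IsHalfDerivation φ) :
    φ (e n) = -(∑ i ∈ Icc 3 (n - 2), coord b (i - 1) (φ (e 1)) • e i)
      + coord b (n - 1) (φ (e n)) • e (n - 1) + coord b 1 (φ (e 1)) • e n := by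
  refine ext_coord (b := b) fun m hm hm' => ?_
  rw [coord_neg_sum_add_smul_e hb (by omega) (fun j => coord b j (φ (e 1)))]
  rcases (by omega : m = 1 ∨ (2 ≤ m ∧ m ≤ n - 2) ∨ m = n - 1 ∨ m = n)
    with rfl | hm₂ | rfl | rfl
  · rw [coord_one_map_e_last h hb hn hφ]; split_ifs <;> first | omega | simp
  · rw [coord_map_e_last h hb hn hφ hm₂.1 hm₂.2]; split_ifs <;> first | omega | simp
  · split_ifs <;> first | omega | simp
  · rw [coord_last_map_e_last h hb hn hφ]; split_ifs <;> first | omega | simp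

theorem map_lie_e_one_e (h : HasBrackets n e) (hn : 5 ≤ n) {a p q : K}
    (h₁ : ∀ j, 2 ≤ j → j < n → ⁅φ (e 1), e j⁆ = a • ⁅e 1, e j⁆)
    (h₂ : φ (e 2) = a • e 2 + p • e (n - 2) + q • e (n - 1))
    (h₃ : φ (e 3) = a • e 3 + ((1 / 2 : K) * p) • e (n - 1))
    (h₄ : ∀ i : ℕ, 4 ≤ i → i ≤ n - 1 → φ (e i) = a • e i) {j : ℕ} (hj : 2 ≤ j) (hj' : j < n) :
    φ ⁅e 1, e j⁆ = (2 : K)⁻¹ • (⁅φ (e 1), e j⁆ + ⁅e 1, φ (e j)⁆) := by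
  rw [h₁ j hj hj']
  rcases (by omega : j ≤ n - 2 ∨ j = n - 1) with hj₂ | rfl
  · rw [h.lie_one hj hj₂]
    rcases (by omega : j = 2 ∨ j = 3 ∨ 4 ≤ j) with rfl | rfl | hj₄
    · rw [h₂, lie_e_one_add_smul_e_two h (by omega), h₃]
      module
    · rw [h₃, lie_e_one_add_smul_e_three h hn, h₄ 4 le_rfl (by omega)]
      module
    · rw [h₄ j hj₄ (by omega), h₄ (j + 1) (by omega) (by omega), lie_smul, h.lie_one hj hj₂]
      module
  · rw [h₄ _ (by omega) le_rfl, lie_smul, h.lie_one_eq_zero (by omega) (by omega) hj]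
    simp

theorem isHalfDerivation_of_eq (h : HasBrackets n e) (hb : ∀ i : Fin n, e (i.1 + 1) = b i)
    (hn : 5 ≤ n) (α β : ℕ → K) (γ : K)
    (h₁ : φ (e 1) = ∑ i ∈ Icc 1 (n - 1), α i • e i)
    (h₂ : φ (e 2) = α 1 • e 2 + β (n - 2) • e (n - 2) + β (n - 1) • e (n - 1))
    (h₃ : φ (e 3) = α 1 • e 3 + ((1 / 2 : K) * β (n - 2)) • e (n - 1))
    (h₄ : ∀ i : ℕ, 4 ≤ i → i ≤ n - 1 → φ (e i) = α 1 • e i)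
    (h₅ : φ (e n) = -(∑ i ∈ Icc 3 (n - 2), α (i - 1) • e i) + γ • e (n - 1) + α 1 • e n) :
    IsHalfDerivation φ := by
  have hφV : ∀ {i j}, 2 ≤ i → i < n → 2 ≤ j → j ≤ n → ⁅φ (e i), e j⁆ = α 1 • ⁅e i, e j⁆ :=
    lie_map_e_of_two_le h (by omega) h₂ h₃ h₄
  refine isHalfDerivation_of_e hb fun i j hi hij hj => ?_
  rcases (by omega : i = 1 ∨ 2 ≤ i) with rfl | hi₂
  · rcases (by omega : j < n ∨ j = n) with hj' | rfl
    · refine map_lie_e_one_e h (by omega) (fun k hk hk' => ?_) h₂ h₃ h₄ (by omega) hj'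
      rw [h₁, lie_sum_smul_e_e h hb α hk hk']
    · rw [h.lie_one_eq_zero (by omega) le_rfl (by omega), map_zero, h₁, h₅,
        lie_sum_e_last_add_lie_e_one h hb (by omega) α γ, smul_zero]
  rcases (by omega : j < n ∨ j = n) with hj' | hjn
  · rw [hφV hi₂ (by omega) (by omega) hj, ← lie_skew (e i) (φ (e j)),
      hφV (by omega) hj' hi₂ (by omega), h.lie_mid hi₂ (by omega) (by omega) hj',
      h.lie_mid (by omega) hj' hi₂ (by omega)]
    simp
  · rw [hjn] at hij ⊢
    rw [hφV hi₂ hij (by omega) le_rfl, h₅, lie_e_neg_sum_smul_e h hb α γ hi₂ hij]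
    rcases (by omega : i ≤ n - 3 ∨ n - 3 < i) with hi₃ | hi₃
    · rw [h.lie_last hi₂ hi₃, h₄ (i + 2) (by omega) (by omega)]
      module
    · rw [h.lie_last_eq_zero hi₃ hij hi₂]
      simp

end HalfDerivations

end G2n1

/-- Description of all 1/2-derivations of g^2_{(n,1)} for n ≥ 7. -/
theorem g2n1_half_derivations
    (n : ℕ) (hn : 7 ≤ n)
    (L : Type*) [LieRing L] [LieAlgebra ℂ L]
    (e : ℕ → L) (b : Module.Basis (Fin n) ℂ L)
    (hb : ∀ i : Fin n, e (i.1 + 1) = b i)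
    (htab : ∀ i j : ℕ, 1 ≤ i → i < j → j ≤ n →
      ⁅e i, e j⁆ =
        if i = 1 ∧ 2 ≤ j ∧ j ≤ n - 2 then e (j + 1)
        else if j = n ∧ 2 ≤ i ∧ i ≤ n - 3 then e (i + 2)
        else 0)
    (φ : L →ₗ[ℂ] L) :
    (∀ x y : L, φ ⁅x, y⁆ = (2 : ℂ)⁻¹ • (⁅φ x, y⁆ + ⁅x, φ y⁆)) ↔
    (∃ (α β : ℕ → ℂ) (γ : ℂ),
      φ (e 1) = ∑ i ∈ Finset.Icc 1 (n - 1), α i • e i ∧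
      φ (e 2) = α 1 • e 2 + β (n - 2) • e (n - 2) + β (n - 1) • e (n - 1) ∧
      φ (e 3) = α 1 • e 3 + ((1 / 2 : ℂ) * β (n - 2)) • e (n - 1) ∧
      (∀ i : ℕ, 4 ≤ i → i ≤ n - 1 → φ (e i) = α 1 • e i) ∧
      φ (e n) = -(∑ i ∈ Finset.Icc 3 (n - 2), α (i - 1) • e i)
        + γ • e (n - 1) + α 1 • e n) := by
  have h : G2n1.HasBrackets n e := htab
  change IsHalfDerivation φ ↔ _
  constructor
  · intro hφ
    exact ⟨fun i => G2n1.coord b i (φ (e 1)), fun i => G2n1.coord b i (φ (e 2)),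
      G2n1.coord b (n - 1) (φ (e n)), G2n1.map_e_one h hb hn hφ, G2n1.map_e_two h hb hn hφ,
      G2n1.map_e_three h hb hn hφ, fun i => G2n1.map_e_of_four_le h hb hn hφ,
      G2n1.map_e_last h hb hn hφ⟩
  · rintro ⟨α, β, γ, h₁, h₂, h₃, h₄, h₅⟩
    exact G2n1.isHalfDerivation_of_eq h hb (by omega) α β γ h₁ h₂ h₃ h₄ h₅
end

section
/- Let g = g^2_{(5,1)} be the 5-dimensional complex Lie algebra with nonzero brackets [e_1,e_2]=e_3, [e_1,e_3]=e_4, [e_2,e_5]=e_4. Then every 1/2-derivation φ of g has the form φ(e_1)=α_1e_1+α_2e_2+α_3e_3+α_4e_4+α_5e_5, φ(e_2)=β_2e_2+β_3e_3+β_4e_4+β_5e_5, φ(e_3)=(1/2)(α_1+β_2)e_3+(1/2)(β_3−α_5)e_4, φ(e_4)=(1/4)(3α_1+β_2)e_4, φ(e_5)=−α_2e_3+γ_4e_4+(1/2)(3α_1−β_2)e_5, for some scalars α_i, β_i, γ_4; and conversely every such map is a 1/2-derivation. -/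
/-!
A δ-derivation identity is bilinear in `(x, y)` and invariant under swapping `x` and `y`, so it
suffices to check it on pairs of basis vectors `b i, b j` with `i < j`; this gives sufficiency.
For necessity, the pairs `(e₁, e₂)` and `(e₁, e₃)` express `φ e₃` and `φ e₄` through `φ e₁` and
`φ e₂`; the pair `(e₂, e₃)` kills the `e₁`-coefficient of `φ e₂`, and comparing the `e₃`- and
`e₄`-coefficients in the pairs `(e₁, e₅)` and `(e₂, e₅)` determines `φ e₅` up to its
`e₄`-coefficient.
-/

section DeltaDerivation

variable {R L : Type*} [CommRing R] [LieRing L] [LieAlgebra R L]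

def IsDeltaDerivation (δ : R) (φ : L →ₗ[R] L) : Prop :=
  ∀ x y : L, φ ⁅x, y⁆ = δ • (⁅φ x, y⁆ + ⁅x, φ y⁆)

theorem isDeltaDerivation_of_basis {ι : Type*} (b : Module.Basis ι R L) {δ : R}
    {φ : L →ₗ[R] L} (h : ∀ i j, φ ⁅b i, b j⁆ = δ • (⁅φ (b i), b j⁆ + ⁅b i, φ (b j)⁆)) :
    IsDeltaDerivation δ φ := by
  let lhs : L →ₗ[R] L →ₗ[R] L := LinearMap.mk₂ R (fun x y => φ ⁅x, y⁆)
    (fun _ _ _ => by rw [add_lie, map_add]) (fun _ _ _ => by rw [smul_lie, map_smul])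
    (fun _ _ _ => by rw [lie_add, map_add]) (fun _ _ _ => by rw [lie_smul, map_smul])
  let rhs : L →ₗ[R] L →ₗ[R] L := LinearMap.mk₂ R (fun x y => δ • (⁅φ x, y⁆ + ⁅x, φ y⁆))
    (fun _ _ _ => by simp only [map_add, add_lie]; module)
    (fun _ _ _ => by simp only [map_smul, smul_lie]; module)
    (fun _ _ _ => by simp only [map_add, lie_add]; module)
    (fun _ _ _ => by simp only [map_smul, lie_smul]; module)
  exact LinearMap.congr_fun₂ (LinearMap.ext_basis b b h : lhs = rhs)

theorem isDeltaDerivation_of_basis_of_lt {ι : Type*} [LinearOrder ι] (b : Module.Basis ι R L)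
    {δ : R} {φ : L →ₗ[R] L}
    (h : ∀ i j, i < j → φ ⁅b i, b j⁆ = δ • (⁅φ (b i), b j⁆ + ⁅b i, φ (b j)⁆)) :
    IsDeltaDerivation δ φ := by
  refine isDeltaDerivation_of_basis b fun i j => ?_
  rcases lt_trichotomy i j with hij | rfl | hji
  · exact h i j hij
  · rw [lie_self, map_zero, ← lie_skew (φ (b i)), neg_add_cancel, smul_zero]
  · rw [← lie_skew, map_neg, h j i hji, ← lie_skew (b i), ← lie_skew (φ (b i))]
    module

end DeltaDerivation

theorem Module.Basis.exists_eq_sum_five {K M : Type*} [Semiring K] [AddCommMonoid M] [Module K M]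
    (b : Module.Basis (Fin 5) K M) (v : M) :
    ∃ c : Fin 5 → K, v = c 0 • b 0 + c 1 • b 1 + c 2 • b 2 + c 3 • b 3 + c 4 • b 4 :=
  ⟨b.repr v, by rw [← Fin.sum_univ_five (fun i => b.repr v i • b i), b.sum_repr]⟩

theorem Module.Basis.eq_zero_of_smul_add_smul_eq_zero {ι K M : Type*} [Ring K] [AddCommGroup M]
    [Module K M] (b : Module.Basis ι K M) {i j : ι} (hij : i ≠ j) {s t : K}
    (h : s • b i + t • b j = 0) : s = 0 ∧ t = 0 :=
  (LinearIndepOn.pair_iff b hij).1 (b.linearIndependent.linearIndepOn _) s t h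

/-- `b i` plays the role of the paper's `e_{i+1}`. -/
class IsG251Basis {K L : Type*} [CommRing K] [LieRing L] [LieAlgebra K L]
    (b : Module.Basis (Fin 5) K L) : Prop where
  lie_01 : ⁅b 0, b 1⁆ = b 2
  lie_02 : ⁅b 0, b 2⁆ = b 3
  lie_14 : ⁅b 1, b 4⁆ = b 3
  lie_03 : ⁅b 0, b 3⁆ = 0
  lie_04 : ⁅b 0, b 4⁆ = 0
  lie_12 : ⁅b 1, b 2⁆ = 0
  lie_13 : ⁅b 1, b 3⁆ = 0
  lie_23 : ⁅b 2, b 3⁆ = 0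
  lie_24 : ⁅b 2, b 4⁆ = 0
  lie_34 : ⁅b 3, b 4⁆ = 0

attribute [simp] IsG251Basis.lie_01 IsG251Basis.lie_02 IsG251Basis.lie_14 IsG251Basis.lie_03
  IsG251Basis.lie_04 IsG251Basis.lie_12 IsG251Basis.lie_13 IsG251Basis.lie_23 IsG251Basis.lie_24
  IsG251Basis.lie_34

namespace IsG251Basis

theorem of_lie_eq {K L : Type*} [CommRing K] [LieRing L] [LieAlgebra K L] (e : ℕ → L)
    (b : Module.Basis (Fin 5) K L) (hb : ∀ i : Fin 5, e (i.1 + 1) = b i)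
    (h12 : ⁅e 1, e 2⁆ = e 3) (h13 : ⁅e 1, e 3⁆ = e 4) (h25 : ⁅e 2, e 5⁆ = e 4)
    (hz : ∀ i j : ℕ, 1 ≤ i → i < j → j ≤ 5 →
      ((i, j) ∉ ({(1, 2), (1, 3), (2, 5)} : Set (ℕ × ℕ))) → ⁅e i, e j⁆ = 0) :
    IsG251Basis b := by
  obtain ⟨h1, h2, h3, h4, h5⟩ : e 1 = b 0 ∧ e 2 = b 1 ∧ e 3 = b 2 ∧ e 4 = b 3 ∧ e 5 = b 4 :=
    ⟨hb 0, hb 1, hb 2, hb 3, hb 4⟩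
  constructor <;> simp only [← h1, ← h2, ← h3, ← h4, ← h5] <;>
    first | assumption | exact hz _ _ (by norm_num) (by norm_num) (by norm_num) (by simp)

section Table

variable {K L : Type*} [CommRing K] [LieRing L] [LieAlgebra K L]
  (b : Module.Basis (Fin 5) K L) [IsG251Basis b]

@[simp] theorem lie_10 : ⁅b 1, b 0⁆ = -b 2 := by rw [← lie_skew, lie_01]
@[simp] theorem lie_20 : ⁅b 2, b 0⁆ = -b 3 := by rw [← lie_skew, lie_02]
@[simp] theorem lie_41 : ⁅b 4, b 1⁆ = -b 3 := by rw [← lie_skew, lie_14]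
@[simp] theorem lie_30 : ⁅b 3, b 0⁆ = 0 := by rw [← lie_skew, lie_03, neg_zero]
@[simp] theorem lie_40 : ⁅b 4, b 0⁆ = 0 := by rw [← lie_skew, lie_04, neg_zero]
@[simp] theorem lie_21 : ⁅b 2, b 1⁆ = 0 := by rw [← lie_skew, lie_12, neg_zero]
@[simp] theorem lie_31 : ⁅b 3, b 1⁆ = 0 := by rw [← lie_skew, lie_13, neg_zero]
@[simp] theorem lie_32 : ⁅b 3, b 2⁆ = 0 := by rw [← lie_skew, lie_23, neg_zero]
@[simp] theorem lie_42 : ⁅b 4, b 2⁆ = 0 := by rw [← lie_skew, lie_24, neg_zero]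
@[simp] theorem lie_43 : ⁅b 4, b 3⁆ = 0 := by rw [← lie_skew, lie_34, neg_zero]

end Table

variable {K L : Type*} [Field K] [CharZero K] [LieRing L] [LieAlgebra K L]
  (b : Module.Basis (Fin 5) K L) [IsG251Basis b]

section Necessity

variable {φ : L →ₗ[K] L} (hφ : IsDeltaDerivation (2⁻¹ : K) φ) {a d : Fin 5 → K}
  (ha : φ (b 0) = a 0 • b 0 + a 1 • b 1 + a 2 • b 2 + a 3 • b 3 + a 4 • b 4)
  (hd : φ (b 1) = d 0 • b 0 + d 1 • b 1 + d 2 • b 2 + d 3 • b 3 + d 4 • b 4)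
include hφ ha hd

theorem halfDerivation_apply_b2 :
    φ (b 2) = ((1 / 2 : K) * (a 0 + d 1)) • b 2 + ((1 / 2 : K) * (d 2 - a 4)) • b 3 := by
  have h := hφ (b 0) (b 1)
  simp only [Fin.isValue, lie_01, ha, add_lie, smul_lie, lie_self, smul_zero, add_zero, lie_21,
    lie_31, lie_41, smul_neg, hd, lie_add, lie_smul, zero_add, lie_02, lie_03, lie_04,
    smul_add] at h
  rw [h]
  module

theorem halfDerivation_apply_b3 : φ (b 3) = ((1 / 4 : K) * (3 * a 0 + d 1)) • b 3 := by
  have h := hφ (b 0) (b 2)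
  simp only [Fin.isValue, lie_02, ha, add_lie, smul_lie, lie_12, smul_zero, add_zero, lie_self,
    lie_32, lie_42, halfDerivation_apply_b2 b hφ ha hd, one_div, lie_add, lie_smul, lie_03,
    smul_add] at h
  rw [h]
  module

theorem halfDerivation_apply_b1_coeff_b0 : d 0 = 0 := by
  simpa [hd, halfDerivation_apply_b2 b hφ ha hd, b.ne_zero] using (hφ (b 1) (b 2)).symm

theorem halfDerivation_apply_b4 {f : Fin 5 → K}
    (hf : φ (b 4) = f 0 • b 0 + f 1 • b 1 + f 2 • b 2 + f 3 • b 3 + f 4 • b 4) :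
    φ (b 4) = (-a 1) • b 2 + f 3 • b 3 + ((1 / 2 : K) * (3 * a 0 - d 1)) • b 4 := by
  have h04 := hφ (b 0) (b 4)
  have h14 := hφ (b 1) (b 4)
  simp only [Fin.isValue, lie_04, map_zero, ha, add_lie, smul_lie, smul_zero, lie_14, zero_add,
    lie_24, add_zero, lie_34, lie_self, hf, lie_add, lie_smul, lie_01, lie_02, lie_03, smul_add,
    halfDerivation_apply_b3 b hφ ha hd, one_div, hd, lie_10, smul_neg, lie_12, lie_13] at h04 h14
  have c04 : f 1 • b 2 + (a 1 + f 2) • b 3 = 0 := by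
    linear_combination (norm := module) (-2 : K) • h04
  have c14 : f 0 • b 2 + ((1 / 2 : K) * (3 * a 0 - d 1) - f 4) • b 3 = 0 := by
    linear_combination (norm := module) (2 : K) • h14
  obtain ⟨hf1, hf2⟩ := b.eq_zero_of_smul_add_smul_eq_zero (by decide) c04
  obtain ⟨hf0, hf4⟩ := b.eq_zero_of_smul_add_smul_eq_zero (by decide) c14
  rw [hf, hf0, hf1, sub_eq_zero.1 hf4, eq_neg_of_add_eq_zero_right hf2]
  module

end Necessity

theorem isDeltaDerivation_two_inv_of_apply {φ : L →ₗ[K] L} {α β : ℕ → K} {γ : K}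
    (h0 : φ (b 0) = α 1 • b 0 + α 2 • b 1 + α 3 • b 2 + α 4 • b 3 + α 5 • b 4)
    (h1 : φ (b 1) = β 2 • b 1 + β 3 • b 2 + β 4 • b 3 + β 5 • b 4)
    (h2 : φ (b 2) = ((1 / 2 : K) * (α 1 + β 2)) • b 2 + ((1 / 2 : K) * (β 3 - α 5)) • b 3)
    (h3 : φ (b 3) = ((1 / 4 : K) * (3 * α 1 + β 2)) • b 3)
    (h4 : φ (b 4) = (-α 2) • b 2 + γ • b 3 + ((1 / 2 : K) * (3 * α 1 - β 2)) • b 4) :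
    IsDeltaDerivation (2⁻¹ : K) φ := by
  refine isDeltaDerivation_of_basis_of_lt b fun i j hij => ?_
  fin_cases i <;> fin_cases j <;> simp [h0, h1, h2, h3, h4] at hij ⊢ <;> module

theorem isDeltaDerivation_two_inv_iff (φ : L →ₗ[K] L) :
    IsDeltaDerivation (2⁻¹ : K) φ ↔ ∃ (α β : ℕ → K) (γ : K),
      φ (b 0) = α 1 • b 0 + α 2 • b 1 + α 3 • b 2 + α 4 • b 3 + α 5 • b 4 ∧
      φ (b 1) = β 2 • b 1 + β 3 • b 2 + β 4 • b 3 + β 5 • b 4 ∧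
      φ (b 2) = ((1 / 2 : K) * (α 1 + β 2)) • b 2 + ((1 / 2 : K) * (β 3 - α 5)) • b 3 ∧
      φ (b 3) = ((1 / 4 : K) * (3 * α 1 + β 2)) • b 3 ∧
      φ (b 4) = (-α 2) • b 2 + γ • b 3 + ((1 / 2 : K) * (3 * α 1 - β 2)) • b 4 := by
  refine ⟨fun hφ => ?_, fun ⟨α, β, γ, h0, h1, h2, h3, h4⟩ =>
    isDeltaDerivation_two_inv_of_apply b h0 h1 h2 h3 h4⟩
  obtain ⟨a, ha⟩ := b.exists_eq_sum_five (φ (b 0))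
  obtain ⟨d, hd⟩ := b.exists_eq_sum_five (φ (b 1))
  obtain ⟨f, hf⟩ := b.exists_eq_sum_five (φ (b 4))
  have hd0 := halfDerivation_apply_b1_coeff_b0 b hφ ha hd
  refine ⟨fun n => a (Fin.ofNat 5 (n - 1)), fun n => d (Fin.ofNat 5 (n - 1)), f 3, ha, ?_,
    halfDerivation_apply_b2 b hφ ha hd, halfDerivation_apply_b3 b hφ ha hd,
    halfDerivation_apply_b4 b hφ ha hd hf⟩
  rw [hd, hd0, zero_smul, zero_add]
  rfl

end IsG251Basis

/-- Description of all 1/2-derivations of g^2_{(5,1)}. -/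
theorem g251_half_derivations
    (L : Type*) [LieRing L] [LieAlgebra ℂ L]
    (e : ℕ → L) (b : Module.Basis (Fin 5) ℂ L)
    (hb : ∀ i : Fin 5, e (i.1 + 1) = b i)
    (h12 : ⁅e 1, e 2⁆ = e 3) (h13 : ⁅e 1, e 3⁆ = e 4) (h25 : ⁅e 2, e 5⁆ = e 4)
    (hz : ∀ i j : ℕ, 1 ≤ i → i < j → j ≤ 5 →
      ((i, j) ∉ ({(1, 2), (1, 3), (2, 5)} : Set (ℕ × ℕ))) → ⁅e i, e j⁆ = 0)
    (φ : L →ₗ[ℂ] L) :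
    (∀ x y : L, φ ⁅x, y⁆ = (2 : ℂ)⁻¹ • (⁅φ x, y⁆ + ⁅x, φ y⁆)) ↔
    (∃ (α β : ℕ → ℂ) (γ : ℂ),
      φ (e 1) = α 1 • e 1 + α 2 • e 2 + α 3 • e 3 + α 4 • e 4 + α 5 • e 5 ∧
      φ (e 2) = β 2 • e 2 + β 3 • e 3 + β 4 • e 4 + β 5 • e 5 ∧
      φ (e 3) = ((1 / 2 : ℂ) * (α 1 + β 2)) • e 3 + ((1 / 2 : ℂ) * (β 3 - α 5)) • e 4 ∧
      φ (e 4) = ((1 / 4 : ℂ) * (3 * α 1 + β 2)) • e 4 ∧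
      φ (e 5) = (-α 2) • e 3 + γ • e 4 + ((1 / 2 : ℂ) * (3 * α 1 - β 2)) • e 5) := by
  have := IsG251Basis.of_lie_eq e b hb h12 h13 h25 hz
  obtain ⟨h1, h2, h3, h4, h5⟩ : e 1 = b 0 ∧ e 2 = b 1 ∧ e 3 = b 2 ∧ e 4 = b 3 ∧ e 5 = b 4 :=
    ⟨hb 0, hb 1, hb 2, hb 3, hb 4⟩
  rw [h1, h2, h3, h4, h5]
  exact IsG251Basis.isDeltaDerivation_two_inv_iff b φ
end
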